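/- For n ≥ 2 and 1 ≤ j ≤ n, the number of permutations of [n] that avoid both 213 and 312 and begin with the letter j equals 2^{n-j-1} if 1 ≤ j < n, and equals 1 if j = n. -/

import Mathlib

/-- `π` contains the pattern `p` (given as the sequence of its values). -/
def ContainsPat {n k : ℕ} (π : Equiv.Perm (Fin n)) (p : Fin k → ℕ) : Prop :=
  ∃ f : Fin k → Fin n, StrictMono f ∧ ∀ a b : Fin k, p a < p b ↔ π (f a) < π (f b)

/-- The first letter of `π` (in one-line notation, with values in `[n] = {1,…,n}`) is `i`. -/
def FirstIs {n : ℕ} (π : Equiv.Perm (Fin n)) (i : ℕ) : Prop :=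
  ∀ j : Fin n, (j : ℕ) = 0 → (π j : ℕ) + 1 = i

/-!
Avoiding both 213 and 312 means having no valley `π a > π b < π c` with `a < b < c`, i.e. being
unimodal: increasing up to the value `n`, decreasing afterwards. Such a permutation lists the set
`A` of values up to its peak increasingly and then the complement decreasingly, so it is determined
by `A`, and every `A ∋ n` arises. Its first letter is `min A`, so starting with `j` means
`{j, n} ⊆ A ⊆ [j, n]`, which leaves `2 ^ (n - j - 1)` choices for `j < n` and one for `j = n`.
-/

open Finset

section Valley

variable {ι α : Type*} [Preorder ι] [Preorder α]

def HasValley (f : ι → α) : Prop :=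
  ∃ a b c, a < b ∧ b < c ∧ f b < f a ∧ f b < f c

theorem not_hasValley_of_strictMonoOn_of_strictAntiOn {f : ι → α} {s : Set ι}
    (hs : IsLowerSet s) (hmono : StrictMonoOn f s) (hanti : StrictAntiOn f sᶜ) :
    ¬ HasValley f := by
  rintro ⟨a, b, c, hab, hbc, hba, hbc'⟩
  by_cases hb : b ∈ s
  · exact (hmono (hs hab.le hb) hb hab).not_gt hba
  · have hc : c ∈ sᶜ := fun hc => hb (hs hbc.le hc)
    exact (hanti hb hc hbc).not_gt hbc'

end Valley

section ValleyFree

variable {ι α : Type*} [LinearOrder ι] [LinearOrder α] {f : ι → α}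

theorem strictMonoOn_Iic_of_not_hasValley (hf : Function.Injective f) (h : ¬ HasValley f)
    {p : ι} (hp : ∀ x, f x ≤ f p) : StrictMonoOn f (Set.Iic p) := by
  intro a _ b hb hab
  by_contra hba
  have hba : f b < f a := (not_lt.mp hba).lt_of_ne (hf.ne hab.ne')
  rcases (Set.mem_Iic.mp hb).lt_or_eq with hbp | rfl
  · exact h ⟨a, b, p, hab, hbp, hba, (hp b).lt_of_ne (hf.ne hbp.ne)⟩
  · exact (hp a).not_gt hba

theorem strictAntiOn_Ici_of_not_hasValley (hf : Function.Injective f) (h : ¬ HasValley f)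
    {p : ι} (hp : ∀ x, f x ≤ f p) : StrictAntiOn f (Set.Ici p) := by
  intro b hb c _ hbc
  by_contra hcb
  have hcb : f b < f c := (not_lt.mp hcb).lt_of_ne (hf.ne hbc.ne)
  rcases (Set.mem_Ici.mp hb).lt_or_eq with hpb | rfl
  · exact h ⟨p, b, c, hpb, hbc, (hp b).lt_of_ne (hf.ne hpb.ne'), hcb⟩
  · exact (hp c).not_gt hcb

end ValleyFree

section Patterns

variable {n : ℕ} (π : Equiv.Perm (Fin n))

theorem ContainsPat.hasValley {p : Fin 3 → ℕ} (h : ContainsPat π p) (h10 : p 1 < p 0)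
    (h12 : p 1 < p 2) : HasValley π := by
  obtain ⟨f, hf, hp⟩ := h
  exact ⟨f 0, f 1, f 2, hf (by decide), hf (by decide), (hp 1 0).1 h10, (hp 1 2).1 h12⟩

theorem containsPat_of_lt_of_lt {p : Fin 3 → ℕ} {a b c : Fin n} (hab : a < b) (hbc : b < c)
    (hp : ∀ x y, p x < p y ↔ π (![a, b, c] x) < π (![a, b, c] y)) : ContainsPat π p :=
  ⟨![a, b, c], Fin.strictMono_iff_lt_succ.2 fun i => by fin_cases i <;> simpa, hp⟩

theorem hasValley_iff_containsPat :
    HasValley π ↔ ContainsPat π ![2, 1, 3] ∨ ContainsPat π ![3, 1, 2] := by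
  constructor
  · rintro ⟨a, b, c, hab, hbc, hba, hbc'⟩
    rcases (π.injective.ne (hab.trans hbc).ne).lt_or_gt with hac | hca
    · exact .inl <| containsPat_of_lt_of_lt π hab hbc fun x y => by
        fin_cases x <;> fin_cases y <;> simp <;> order
    · exact .inr <| containsPat_of_lt_of_lt π hab hbc fun x y => by
        fin_cases x <;> fin_cases y <;> simp <;> order
  · rintro (h | h) <;> exact h.hasValley π (by decide) (by decide)

end Patterns

section Unimodal

variable {n : ℕ}

structure IsUnimodalWithLeftSet (A : Finset (Fin n)) (f : Fin n → Fin n) : Prop where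
  mem_iff : ∀ i, f i ∈ A ↔ (i : ℕ) < #A
  strictMonoOn : StrictMonoOn f {i | (i : ℕ) < #A}
  strictAntiOn : StrictAntiOn f {i | (i : ℕ) < #A}ᶜ

theorem Finset.card_add_card_compl_fin (A : Finset (Fin n)) : #A + #Aᶜ = n := by
  simp

def unimodalFun (A : Finset (Fin n)) (i : Fin n) : Fin n :=
  if h : (i : ℕ) < #A then A.orderEmbOfFin rfl ⟨i, h⟩
  else Aᶜ.orderEmbOfFin rfl ⟨n - 1 - i, by have := A.card_add_card_compl_fin; omega⟩

theorem isUnimodalWithLeftSet_unimodalFun (A : Finset (Fin n)) :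
    IsUnimodalWithLeftSet A (unimodalFun A) where
  mem_iff i := by
    unfold unimodalFun
    split_ifs with h
    · simp [h]
    · simpa [h] using mem_compl.1 (Aᶜ.orderEmbOfFin_mem rfl _)
  strictMonoOn i (hi : (i : ℕ) < #A) j (hj : (j : ℕ) < #A) hij := by
    rw [unimodalFun, dif_pos hi, unimodalFun, dif_pos hj]
    exact (A.orderEmbOfFin rfl).strictMono (Fin.mk_lt_mk.2 hij)
  strictAntiOn i (hi : ¬ (i : ℕ) < #A) j (hj : ¬ (j : ℕ) < #A) hij := by
    rw [unimodalFun, dif_neg hj, unimodalFun, dif_neg hi]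
    refine (Aᶜ.orderEmbOfFin rfl).strictMono (Fin.mk_lt_mk.2 ?_)
    have := j.isLt
    have : (i : ℕ) < j := hij
    omega

namespace IsUnimodalWithLeftSet

variable {A : Finset (Fin n)} {f : Fin n → Fin n}

-- Both halves of `f` are strictly increasing enumerations (of `A`, and of `Aᶜ` read backwards),
-- and such an enumeration is unique.
theorem eq_unimodalFun (h : IsUnimodalWithLeftSet A f) : f = unimodalFun A := by
  have hcard := A.card_add_card_compl_fin
  funext i
  unfold unimodalFun
  split_ifs with hi
  · have hleft := orderEmbOfFin_unique (s := A) rfl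
      (f := fun r => f ⟨r, by omega⟩) (fun r => (h.mem_iff _).2 r.isLt)
      (fun r s hrs => h.strictMonoOn r.isLt s.isLt hrs)
    exact congrFun hleft ⟨i, hi⟩
  · have hright := orderEmbOfFin_unique (s := Aᶜ) rfl
      (f := fun r => f ⟨n - 1 - r, by omega⟩)
      (fun r => mem_compl.2 fun hr => absurd ((h.mem_iff _).1 hr) (by dsimp only; omega))
      (fun r s hrs => h.strictAntiOn (by simp only [Set.mem_compl_iff, Set.mem_ofPred_eq]; omega)
        (by simp only [Set.mem_compl_iff, Set.mem_ofPred_eq]; omega)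
        (Fin.mk_lt_mk.2 (by have : (r : ℕ) < s := hrs; omega)))
    convert congrFun hright ⟨n - 1 - i, by omega⟩ using 2
    ext
    simp only
    omega

theorem injective (h : IsUnimodalWithLeftSet A f) : Function.Injective f := by
  intro i j hij
  by_cases hi : (i : ℕ) < #A
  · have hj : (j : ℕ) < #A := (h.mem_iff j).1 (hij ▸ (h.mem_iff i).2 hi)
    exact h.strictMonoOn.injOn hi hj hij
  · have hj : ¬ (j : ℕ) < #A := fun hj => hi ((h.mem_iff i).1 (hij ▸ (h.mem_iff j).2 hj))
    exact h.strictAntiOn.injOn hi hj hij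

theorem not_hasValley (h : IsUnimodalWithLeftSet A f) : ¬ HasValley f :=
  not_hasValley_of_strictMonoOn_of_strictAntiOn
    (fun _ _ hij hj => lt_of_le_of_lt (Fin.le_def.1 hij) hj) h.strictMonoOn h.strictAntiOn

end IsUnimodalWithLeftSet

noncomputable def unimodalPerm (A : Finset (Fin n)) : Equiv.Perm (Fin n) :=
  .ofBijective (unimodalFun A)
    (Finite.injective_iff_bijective.1 (isUnimodalWithLeftSet_unimodalFun A).injective)

theorem isUnimodalWithLeftSet_unimodalPerm (A : Finset (Fin n)) :
    IsUnimodalWithLeftSet A (unimodalPerm A) :=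
  isUnimodalWithLeftSet_unimodalFun A

end Unimodal

section LeftSet

variable {m : ℕ}

def leftSet (π : Equiv.Perm (Fin (m + 1))) : Finset (Fin (m + 1)) :=
  (Iic (π.symm (Fin.last m))).map π.toEmbedding

variable {π : Equiv.Perm (Fin (m + 1))} {A : Finset (Fin (m + 1))}

theorem mem_leftSet {v : Fin (m + 1)} : v ∈ leftSet π ↔ π.symm v ≤ π.symm (Fin.last m) := by
  simp [leftSet]

theorem card_leftSet : #(leftSet π) = π.symm (Fin.last m) + 1 := by
  simp [leftSet]

theorem isUnimodalWithLeftSet_leftSet (h : ¬ HasValley π) :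
    IsUnimodalWithLeftSet (leftSet π) π := by
  set p := π.symm (Fin.last m)
  have hp : ∀ x, π x ≤ π p := by simp [p, Fin.le_last]
  refine ⟨fun i => ?_, ?_, ?_⟩
  · rw [mem_leftSet, card_leftSet, π.symm_apply_apply, Nat.lt_succ_iff, Fin.le_def]
  · refine (strictMonoOn_Iic_of_not_hasValley π.injective h hp).mono fun i hi => ?_
    rw [card_leftSet, Set.mem_ofPred_eq, Nat.lt_succ_iff] at hi
    exact Fin.le_def.2 hi
  · refine (strictAntiOn_Ici_of_not_hasValley π.injective h hp).mono fun i hi => ?_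
    rw [card_leftSet, Set.mem_compl_iff, Set.mem_ofPred_eq, not_lt] at hi
    exact Fin.le_def.2 (by omega)

theorem IsUnimodalWithLeftSet.leftSet_eq (h : IsUnimodalWithLeftSet A π) (hA : Fin.last m ∈ A) :
    leftSet π = A := by
  ext v
  have hv : v ∈ A ↔ (π.symm v : ℕ) < #A := by simpa using h.mem_iff (π.symm v)
  have hlast : (π.symm (Fin.last m) : ℕ) < #A := (h.mem_iff _).1 (by simpa using hA)
  rw [mem_leftSet, hv]
  refine ⟨fun hle => lt_of_le_of_lt (Fin.le_def.1 hle) hlast, fun hlt => not_lt.1 fun hgt => ?_⟩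
  have := h.strictMonoOn hlast hlt hgt
  simp only [Equiv.apply_symm_apply] at this
  exact (Fin.le_last v).not_gt this

theorem unimodalPerm_leftSet (h : ¬ HasValley π) : unimodalPerm (leftSet π) = π :=
  Equiv.ext fun i => (congrFun (isUnimodalWithLeftSet_leftSet h).eq_unimodalFun i).symm

theorem leftSet_mem_Icc (h : ¬ HasValley π) :
    leftSet π ∈ Icc {π 0, Fin.last m} (Icc (π 0) (Fin.last m)) := by
  have hmono := (strictMonoOn_Iic_of_not_hasValley π.injective h
    (p := π.symm (Fin.last m)) (by simp [Fin.le_last])).monotoneOn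
  refine mem_Icc.2 ⟨insert_subset_iff.2 ⟨by simp [mem_leftSet], by simp [mem_leftSet]⟩,
    fun v hv => mem_Icc.2 ⟨?_, Fin.le_last v⟩⟩
  rw [mem_leftSet] at hv
  simpa using hmono (Fin.zero_le _) hv (Fin.zero_le _)

theorem unimodalPerm_zero {k : Fin (m + 1)} (hA : A ∈ Icc {k, Fin.last m} (Icc k (Fin.last m))) :
    unimodalPerm A 0 = k := by
  obtain ⟨hkA, hAk⟩ := mem_Icc.1 hA
  have hk : k ∈ A := hkA (mem_insert_self _ _)
  have hpos : 0 < #A := card_pos.2 ⟨k, hk⟩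
  change unimodalFun A 0 = k
  rw [unimodalFun, dif_pos (show ((0 : Fin (m + 1)) : ℕ) < #A from hpos)]
  exact (orderEmbOfFin_zero rfl hpos).trans
    ((min'_eq_iff _ _ k).2 ⟨hk, fun v hv => (mem_Icc.1 (hAk hv)).1⟩)

end LeftSet

theorem card_Icc_pair_Icc_last {m : ℕ} (k : Fin (m + 1)) :
    #(Icc {k, Fin.last m} (Icc k (Fin.last m))) = 2 ^ (m - k - 1) := by
  have hsub : ({k, Fin.last m} : Finset _) ⊆ Icc k (Fin.last m) := by
    simp [insert_subset_iff, Fin.le_last]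
  rw [card_Icc_finset hsub, Fin.card_Icc, Fin.val_last]
  rcases (Fin.le_last k).lt_or_eq with hk | rfl
  · have : (k : ℕ) < m := hk
    rw [card_pair hk.ne]
    congr 1
    omega
  · simp

theorem card_not_hasValley_apply_zero {m : ℕ} (k : Fin (m + 1)) :
    Nat.card {π : Equiv.Perm (Fin (m + 1)) // ¬ HasValley π ∧ π 0 = k} = 2 ^ (m - k - 1) := by
  classical
  rw [Nat.card_eq_fintype_card, Fintype.card_subtype, ← card_Icc_pair_Icc_last]
  refine card_nbij' leftSet unimodalPerm (fun π hπ => ?_) (fun A hA => ?_)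
    (fun π hπ => unimodalPerm_leftSet (mem_filter.1 hπ).2.1) (fun A hA => ?_)
  · obtain ⟨h, rfl⟩ := (mem_filter.1 hπ).2
    exact leftSet_mem_Icc h
  · exact mem_filter.2 ⟨mem_univ _,
      (isUnimodalWithLeftSet_unimodalPerm A).not_hasValley, unimodalPerm_zero hA⟩
  · exact (isUnimodalWithLeftSet_unimodalPerm A).leftSet_eq
      ((mem_Icc.1 hA).1 (mem_insert_of_mem (mem_singleton_self _)))

theorem firstIs_iff {m : ℕ} (π : Equiv.Perm (Fin (m + 1))) (j : ℕ) :
    FirstIs π j ↔ (π 0 : ℕ) + 1 = j :=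
  ⟨fun h => h 0 rfl, fun h i hi => by rwa [show i = 0 from Fin.ext hi]⟩

/-- For `n ≥ 2`, the number of `{213,312}`-avoiding permutations of `[n]` starting
with `j` is `2^{n-j-1}` for `1 ≤ j < n` and `1` for `j = n`. -/
theorem stmt_9 (n : ℕ) (hn : 2 ≤ n) :
    (∀ j, 1 ≤ j → j < n →
      Nat.card {π : Equiv.Perm (Fin n) //
        ¬ ContainsPat π ![2, 1, 3] ∧ ¬ ContainsPat π ![3, 1, 2] ∧ FirstIs π j} =
        2 ^ (n - j - 1)) ∧
    Nat.card {π : Equiv.Perm (Fin n) //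
      ¬ ContainsPat π ![2, 1, 3] ∧ ¬ ContainsPat π ![3, 1, 2] ∧ FirstIs π n} = 1 := by
  obtain ⟨m, rfl⟩ : ∃ m, n = m + 1 := ⟨n - 1, by omega⟩
  have count (j : ℕ) (hj : 1 ≤ j) (hjm : j ≤ m + 1) :
      Nat.card {π : Equiv.Perm (Fin (m + 1)) //
        ¬ ContainsPat π ![2, 1, 3] ∧ ¬ ContainsPat π ![3, 1, 2] ∧ FirstIs π j} =
        2 ^ (m + 1 - j - 1) := by
    calc _ = Nat.card {π : Equiv.Perm (Fin (m + 1)) //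
            ¬ HasValley π ∧ π 0 = ⟨j - 1, by omega⟩} :=
          Nat.card_congr <| Equiv.subtypeEquivRight fun π => by
            rw [← and_assoc, ← not_or, ← hasValley_iff_containsPat, firstIs_iff, Fin.ext_iff]
            exact and_congr_right fun _ => by dsimp only; omega
      _ = 2 ^ (m + 1 - j - 1) := by
          rw [card_not_hasValley_apply_zero]
          congr 1
          dsimp only
          omega
  exact ⟨fun j hj hjm => count j hj hjm.le, by simpa using count (m + 1) (by omega) le_rfl⟩
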